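/- Let n ≥ 3 and let S = {x, y, z, w} be a set of four vertices of the bubble-sort graph B_n all lying in the same part V_m for some m ∈ [n]. If there exist n − 3 internally disjoint trees connecting S inside the induced subgraph B_n[V_m], then there exist n − 2 internally disjoint trees connecting S in B_n. -/

import Mathlib

open SimpleGraph

/-- The bubble-sort graph `B_n`: the Cayley graph on `Sym(n)` whose connection set is the set of
adjacent transpositions `[i, i+1]`, `1 ≤ i ≤ n-1`; `σ` and `τ` are adjacent iff
`τ = σ * [i, i+1]` for some `i`. -/
def bubbleSortGraph (n : ℕ) : SimpleGraph (Equiv.Perm (Fin n)) :=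
  SimpleGraph.fromRel (fun σ τ => ∃ i j : Fin n, (j : ℕ) = (i : ℕ) + 1 ∧ τ = σ * Equiv.swap i j)

/-- `T` is a family of internally disjoint trees connecting `S` in `G`: each `T i` is a tree
(as a subgraph of `G`) containing all vertices of `S`, the trees are pairwise edge disjoint, and
any two of them share exactly the vertices of `S`. -/
def InternallyDisjointTrees {V : Type*} (G : SimpleGraph V) (S : Set V) {ℓ : ℕ}
    (T : Fin ℓ → G.Subgraph) : Prop :=
  (∀ i, (T i).coe.IsTree ∧ S ⊆ (T i).verts) ∧
    Pairwise fun i j =>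
      (T i).edgeSet ∩ (T j).edgeSet = ∅ ∧ (T i).verts ∩ (T j).verts = S

/-- `κ_G(S)`: the maximum number of internally disjoint trees connecting `S` in `G`. -/
noncomputable def treeConnectivity {V : Type*} (G : SimpleGraph V) (S : Set V) : ℕ :=
  sSup {ℓ : ℕ | ∃ T : Fin ℓ → G.Subgraph, InternallyDisjointTrees G S T}

/-- The generalized `k`-connectivity `κ_k(G) = min {κ_G(S) : S ⊆ V(G), |S| = k}`. -/
noncomputable def generalizedConnectivity {V : Type*} (G : SimpleGraph V) (k : ℕ) : ℕ :=
  sInf {m : ℕ | ∃ S : Finset V, S.card = k ∧ m = treeConnectivity G ↑S}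

/-- The vertex connectivity `κ(G)`: the minimum cardinality of a set `S` of vertices such that
`G - S` is disconnected or has at most one vertex. -/
noncomputable def vertexConnectivity {V : Type*} (G : SimpleGraph V) : ℕ :=
  sInf {k : ℕ | ∃ S : Set V,
    S.ncard = k ∧ (¬ (G.induce Sᶜ).Connected ∨ Sᶜ.ncard ≤ 1)}

/-- `V_i`: the set of permutations `σ` of `[n]` with `σ(n) = i` (last entry equal to `i`). -/
def Vpart (n : ℕ) (hn : 0 < n) (i : Fin n) : Set (Equiv.Perm (Fin n)) :=
  {σ | σ ⟨n - 1, Nat.sub_lt hn Nat.one_pos⟩ = i}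

namespace BSAux


/-- A bubble-sort step using only positions `< k`. -/
def Step (n k : ℕ) (σ τ : Equiv.Perm (Fin n)) : Prop :=
  ∃ i j : Fin n, (j : ℕ) = (i : ℕ) + 1 ∧ (j : ℕ) < k ∧ τ = σ * Equiv.swap i j

lemma step_adj {n k : ℕ} {σ τ : Equiv.Perm (Fin n)} (h : Step n k σ τ) :
    (bubbleSortGraph n).Adj σ τ := by
  obtain ⟨i, j, hij, -, rfl⟩ := h
  have hne : i ≠ j := by
    intro h; rw [h] at hij; omega
  rw [bubbleSortGraph, SimpleGraph.fromRel_adj]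
  refine ⟨?_, Or.inl ⟨i, j, hij, rfl⟩⟩
  intro hEq
  have h2 : σ i = σ j := by
    conv_lhs => rw [hEq]
    rw [Equiv.Perm.mul_apply, Equiv.swap_apply_left]
  exact hne (σ.injective h2)

lemma step_fix {n k : ℕ} {σ τ : Equiv.Perm (Fin n)} (h : Step n k σ τ)
    (a : Fin n) (ha : k ≤ (a : ℕ)) : τ a = σ a := by
  obtain ⟨i, j, hij, hjk, rfl⟩ := h
  rw [Equiv.Perm.mul_apply, Equiv.swap_apply_of_ne_of_ne]
  · intro h; rw [h] at ha; omega
  · intro h; rw [h] at ha; omega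

/-- Reachability using bubble-sort steps in positions `< k`. -/
def ReachK (n k : ℕ) : Equiv.Perm (Fin n) → Equiv.Perm (Fin n) → Prop :=
  Relation.ReflTransGen (Step n k)

lemma reachK_mono {n k k' : ℕ} (h : k ≤ k') {σ τ : Equiv.Perm (Fin n)}
    (hr : ReachK n k σ τ) : ReachK n k' σ τ :=
  Relation.ReflTransGen.mono (r := Step n k) (p := Step n k')
    (fun _ _ (hs : Step n k _ _) => by
      obtain ⟨i, j, h1, h2, h3⟩ := hs
      exact ⟨i, j, h1, lt_of_lt_of_le h2 h, h3⟩) _ _ hr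

lemma bubble {n : ℕ} (d : ℕ) : ∀ (σ : Equiv.Perm (Fin n)) (p : ℕ) (hd : p + d < n),
    ∃ τ, ReachK n (p + d + 1) σ τ ∧ τ ⟨p + d, hd⟩ = σ ⟨p, by omega⟩ ∧
      ∀ a : Fin n, p + d < (a : ℕ) → τ a = σ a := by
  induction d with
  | zero => exact fun σ p hd => ⟨σ, Relation.ReflTransGen.refl, rfl, fun _ _ => rfl⟩
  | succ d ih =>
    intro σ p hd
    obtain ⟨τ₀, hr, hval, hfix⟩ := ih σ p (by omega)
    have hd1 : p + d < n := by omega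
    have hd2 : p + d + 1 < n := by omega
    set a1 : Fin n := ⟨p + d, hd1⟩ with ha1
    set a2 : Fin n := ⟨p + d + 1, hd2⟩ with ha2
    refine ⟨τ₀ * Equiv.swap a1 a2, ?_, ?_, ?_⟩
    · refine (reachK_mono (by omega) hr).tail ?_
      exact ⟨a1, a2, rfl, by simp [ha1, ha2], rfl⟩
    · show (τ₀ * Equiv.swap a1 a2) a2 = _
      rw [Equiv.Perm.mul_apply, Equiv.swap_apply_right, hval]
    · intro a ha
      rw [Equiv.Perm.mul_apply, Equiv.swap_apply_of_ne_of_ne, hfix a (by omega)]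
      · intro h
        have := congrArg Fin.val h
        simp [ha1] at this; omega
      · intro h
        have := congrArg Fin.val h
        simp [ha2] at this; omega

lemma sortK {n : ℕ} : ∀ (k : ℕ), k ≤ n → ∀ σ τ : Equiv.Perm (Fin n),
    (∀ a : Fin n, k ≤ (a : ℕ) → σ a = τ a) → ReachK n k σ τ := by
  intro k
  induction k with
  | zero =>
    intro _ σ τ hagree
    have : σ = τ := Equiv.ext fun a => hagree a (Nat.zero_le _)
    exact this ▸ Relation.ReflTransGen.refl
  | succ k ih =>
    intro hk σ τ hagree
    have hkn : k < n := by omega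
    set kf : Fin n := ⟨k, hkn⟩ with hkf
    set p := σ.symm (τ kf) with hp
    have hple : (p : ℕ) ≤ k := by
      by_contra hgt
      push_neg at hgt
      have h1 : σ p = τ p := hagree p (by omega)
      have h2 : σ p = τ kf := σ.apply_symm_apply _
      have h3 : p = kf := τ.injective (h1.symm.trans h2)
      have := congrArg Fin.val h3
      simp [hkf] at this; omega
    obtain ⟨τ₀, hr, hval, hfix⟩ := bubble (k - (p : ℕ)) σ (p : ℕ) (by omega)
    have hpk : (p : ℕ) + (k - (p : ℕ)) = k := by omega
    have e1 : (⟨(p : ℕ) + (k - (p : ℕ)), by omega⟩ : Fin n) = kf := by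
      simp [Fin.ext_iff, hkf]; omega
    have e2 : (⟨(p : ℕ), by omega⟩ : Fin n) = p := by simp [Fin.ext_iff]
    have hσp : σ p = τ kf := σ.apply_symm_apply _
    have hval' : τ₀ kf = τ kf :=
      ((congrArg τ₀ e1.symm).trans hval).trans ((congrArg σ e2).trans hσp)
    have hr' : ReachK n (k + 1) σ τ₀ := reachK_mono (by omega) hr
    have h2 : ReachK n k τ₀ τ := by
      refine ih (by omega) τ₀ τ (fun a ha => ?_)
      rcases eq_or_lt_of_le ha with heq | hlt
      · have : a = kf := by simp [Fin.ext_iff, hkf]; omega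
        rw [this, hval']
      · rw [hfix a (by omega)]
        exact hagree a (by omega)
    exact hr'.trans (reachK_mono (by omega) h2)



lemma reachable_delete_of_walk {V : Type*} {G : SimpleGraph V} {a b : V}
    (hr : (G \ fromEdgeSet {s(a, b)}).Reachable a b) :
    ∀ {u v : V}, G.Walk u v → (G \ fromEdgeSet {s(a, b)}).Reachable u v := by
  intro u v p
  induction p with
  | nil => exact Reachable.refl _
  | @cons u u₁ v h q ih =>
    refine Reachable.trans ?_ ih
    by_cases hcase : s(u, u₁) = s(a, b)
    · rw [Sym2.eq_iff] at hcase
      rcases hcase with ⟨rfl, rfl⟩ | ⟨rfl, rfl⟩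
      · exact hr
      · exact hr.symm
    · refine Adj.reachable ?_
      rw [sdiff_adj]
      refine ⟨h, ?_⟩
      rw [fromEdgeSet_adj]
      rintro ⟨hmem, -⟩
      exact hcase hmem

lemma exists_tree_le {V : Type*} [Finite V] :
    ∀ (k : ℕ) (G : SimpleGraph V), G.edgeSet.ncard = k → G.Connected →
      ∃ T : SimpleGraph V, T ≤ G ∧ T.IsTree := by
  intro k
  induction k using Nat.strong_induction_on with
  | _ k ih =>
    intro G hk hG
    by_cases hac : G.IsAcyclic
    · exact ⟨G, le_refl _, ⟨hG, hac⟩⟩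
    · rw [IsAcyclic] at hac
      push_neg at hac
      obtain ⟨v, c, hc⟩ := hac
      cases c with
      | nil => exact absurd rfl hc.ne_nil
      | @cons _ b _ hadj p =>
        have he : s(v, b) ∈ (Walk.cons hadj p).edges := List.mem_cons_self
        have hreach : (G \ fromEdgeSet {s(v, b)}).Reachable v b :=
          (adj_and_reachable_delete_edges_iff_exists_cycle.mpr ⟨v, _, hc, he⟩).2
        set G' := G \ fromEdgeSet {s(v, b)} with hG'
        have hG'le : G' ≤ G := sdiff_le
        have hG'conn : G'.Connected := by
          have : Nonempty V := hG.nonempty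
          refine Connected.mk fun u w => ?_
          obtain ⟨q⟩ := hG.preconnected u w
          exact reachable_delete_of_walk hreach q
        have hE : G'.edgeSet = G.edgeSet \ {s(v, b)} := by
          rw [hG', edgeSet_sdiff, edgeSet_fromEdgeSet, edgeSet_sdiff_sdiff_isDiag]
        have hmem : s(v, b) ∈ G.edgeSet := hadj
        have hlt : G'.edgeSet.ncard < k := by
          rw [hE, ← hk]
          exact Set.ncard_diff_singleton_lt_of_mem hmem (Set.toFinite _)
        obtain ⟨T, hTle, hT⟩ := ih _ hlt G' rfl hG'conn
        exact ⟨T, hTle.trans hG'le, hT⟩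

lemma subgraph_exists_tree {V : Type*} [Finite V] {G : SimpleGraph V} (H : G.Subgraph)
    (hH : H.Connected) :
    ∃ T : G.Subgraph, T.verts = H.verts ∧ T ≤ H ∧ T.coe.IsTree := by
  obtain ⟨t, htle, htree⟩ := exists_tree_le H.coe.edgeSet.ncard H.coe rfl hH
  refine ⟨⟨H.verts, fun a b => ∃ (ha : a ∈ H.verts) (hb : b ∈ H.verts), t.Adj ⟨a, ha⟩ ⟨b, hb⟩,
    ?_, ?_, ?_⟩, rfl, ⟨le_refl _, ?_⟩, ?_⟩
  · rintro a b ⟨ha, hb, hadj⟩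
    exact H.adj_sub (htle hadj)
  · rintro a b ⟨ha, hb, hadj⟩
    exact ha
  · refine ⟨?_⟩
    rintro a b ⟨ha, hb, hadj⟩
    exact ⟨hb, ha, hadj.symm⟩
  · rintro a b ⟨ha, hb, hadj⟩
    exact htle hadj
  · have hco : (⟨H.verts, fun a b => ∃ (ha : a ∈ H.verts) (hb : b ∈ H.verts),
        t.Adj ⟨a, ha⟩ ⟨b, hb⟩, fun {a b} h => H.adj_sub (htle h.2.2),
        fun {a b} h => h.1, ⟨fun a b ⟨ha, hb, hadj⟩ => ⟨hb, ha, hadj.symm⟩⟩⟩ :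
        G.Subgraph).coe = t := by
      ext ⟨a, ha⟩ ⟨b, hb⟩
      constructor
      · rintro ⟨ha', hb', hadj⟩
        exact hadj
      · intro hadj
        exact ⟨ha, hb, hadj⟩
    rw [hco]
    exact htree

end BSAux

/-- Let `n ≥ 3` and let `S = {x, y, z, w}` be a set of four vertices of `B_n`, all lying in the
same part `V_m`. If there exist `n - 3` internally disjoint trees connecting `S` inside the
induced subgraph `B_n[V_m]`, then there exist `n - 2` internally disjoint trees connecting `S`
in `B_n`. -/
theorem internallyDisjointTrees_of_trees_in_Vpart (n : ℕ) (hn : 3 ≤ n) (m : Fin n)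
    (x y z w : Equiv.Perm (Fin n))
    (hxy : x ≠ y) (hxz : x ≠ z) (hxw : x ≠ w) (hyz : y ≠ z) (hyw : y ≠ w) (hzw : z ≠ w)
    (hx : x ∈ Vpart n (by omega) m) (hy : y ∈ Vpart n (by omega) m)
    (hz : z ∈ Vpart n (by omega) m) (hw : w ∈ Vpart n (by omega) m)
    (h : ∃ T : Fin (n - 3) → (bubbleSortGraph n).Subgraph,
      InternallyDisjointTrees (bubbleSortGraph n) {x, y, z, w} T ∧
        ∀ i, (T i).verts ⊆ Vpart n (by omega) m) :
    ∃ T : Fin (n - 2) → (bubbleSortGraph n).Subgraph,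
      InternallyDisjointTrees (bubbleSortGraph n) {x, y, z, w} T := by
  classical
  obtain ⟨T₀, hIDT, hVsub⟩ := h
  have hn1 : n - 1 < n := by omega
  have hn2 : n - 2 < n := by omega
  set last : Fin n := ⟨n - 1, hn1⟩ with hlast
  set pen : Fin n := ⟨n - 2, hn2⟩ with hpen
  have hpl : pen ≠ last := by
    intro hcon
    have h2 : n - 2 = n - 1 := congrArg Fin.val hcon
    omega
  set U : Set (Equiv.Perm (Fin n)) := {σ | σ last ≠ m} with hU
  have hVm : ∀ a : Equiv.Perm (Fin n), a ∈ Vpart n (by omega) m ↔ a last = m := fun a => Iff.rfl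
  have hVmU : ∀ a : Equiv.Perm (Fin n), a ∈ Vpart n (by omega) m → a ∉ U := by
    intro a ha hu
    exact hu ((hVm a).mp ha)
  set sw : Equiv.Perm (Fin n) := Equiv.swap pen last with hsw
  have hswlast : ∀ σ : Equiv.Perm (Fin n), (σ * sw) last = σ pen := fun σ => by
    rw [hsw, Equiv.Perm.mul_apply, Equiv.swap_apply_right]
  have hadj : ∀ σ : Equiv.Perm (Fin n), (bubbleSortGraph n).Adj σ (σ * sw) := fun σ =>
    BSAux.step_adj (k := n)
      ⟨pen, last, by show n - 1 = n - 2 + 1; omega, by show n - 1 < n; omega, rfl⟩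
  have houtU : ∀ σ : Equiv.Perm (Fin n), σ ∈ Vpart n (by omega) m → σ * sw ∈ U := by
    intro σ hσ hcon
    rw [hswlast σ] at hcon
    have h2 : σ pen = σ last := hcon.trans ((hVm σ).mp hσ).symm
    exact hpl (σ.injective h2)
  -- The subgraph induced on U
  set H₁ : (bubbleSortGraph n).Subgraph :=
    { verts := U
      Adj := fun a b => a ∈ U ∧ b ∈ U ∧ (bubbleSortGraph n).Adj a b
      adj_sub := fun h => h.2.2
      edge_vert := fun h => h.1
      symm := ⟨fun a b h => ⟨h.2.1, h.1, h.2.2.symm⟩⟩ } with hH₁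
  have key0 : ∀ (σ τ : Equiv.Perm (Fin n)), BSAux.ReachK n (n - 1) σ τ → ∀ hσ : σ ∈ U,
      ∃ hτ : τ ∈ U, H₁.coe.Reachable ⟨σ, hσ⟩ ⟨τ, hτ⟩ := by
    intro σ τ hr
    induction hr with
    | refl => exact fun hσ => ⟨hσ, Reachable.refl _⟩
    | @tail mid τ hr hstep ih =>
      intro hσ
      obtain ⟨hmid, hreach⟩ := ih hσ
      have hfix : τ last = mid last :=
        BSAux.step_fix hstep last (by simp only [hlast]; omega)
      have hτU : τ ∈ U := fun hcon => hmid (hfix.symm.trans hcon)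
      refine ⟨hτU, hreach.trans (Adj.reachable ?_)⟩
      exact ⟨hmid, hτU, BSAux.step_adj hstep⟩
  have keypart : ∀ (σ τ : Equiv.Perm (Fin n)) (hσ : σ ∈ U) (hτ : τ ∈ U), σ last = τ last →
      H₁.coe.Reachable ⟨σ, hσ⟩ ⟨τ, hτ⟩ := by
    intro σ τ hσ hτ heq
    have hr : BSAux.ReachK n (n - 1) σ τ := by
      refine BSAux.sortK (n - 1) (by omega) σ τ (fun a ha => ?_)
      have haa : a = last := by
        simp only [Fin.ext_iff, hlast]
        have := a.isLt; omega
      rw [haa]; exact heq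
    obtain ⟨hτ', hreach⟩ := key0 σ τ hr hσ
    exact hreach
  have keyU : ∀ (σ τ : Equiv.Perm (Fin n)) (hσ : σ ∈ U) (hτ : τ ∈ U),
      H₁.coe.Reachable ⟨σ, hσ⟩ ⟨τ, hτ⟩ := by
    intro σ τ hσ hτ
    by_cases heq : σ last = τ last
    · exact keypart σ τ hσ hτ heq
    · set c : Equiv.Perm (Fin n) := Equiv.swap last (σ last) with hc
      have hclast : c last = σ last := by rw [hc]; exact Equiv.swap_apply_left _ _
      set π : Equiv.Perm (Fin n) := c * Equiv.swap pen (c.symm (τ last)) with hπ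
      have hπlast : π last = σ last := by
        have h0 : (Equiv.swap pen (c.symm (τ last))) last = last := by
          apply Equiv.swap_apply_of_ne_of_ne
          · exact fun hcon => hpl hcon.symm
          · intro hcon
            have h2 : c last = τ last := by
              have h3 := congrArg c hcon
              rwa [Equiv.apply_symm_apply] at h3
            exact heq (hclast.symm.trans h2)
        calc π last = c ((Equiv.swap pen (c.symm (τ last))) last) := rfl
        _ = c last := by rw [h0]
        _ = σ last := hclast
      have hπpen : π pen = τ last := by
        rw [hπ, Equiv.Perm.mul_apply, Equiv.swap_apply_left, Equiv.apply_symm_apply]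
      have hπU : π ∈ U := by
        rw [hU, Set.mem_setOf_eq, hπlast]; exact hσ
      have hπ'last : (π * sw) last = τ last := by rw [hswlast π, hπpen]
      have hπ'U : π * sw ∈ U := by
        rw [hU, Set.mem_setOf_eq, hπ'last]; exact hτ
      have r1 : H₁.coe.Reachable ⟨σ, hσ⟩ ⟨π, hπU⟩ := keypart σ π hσ hπU hπlast.symm
      have r2 : H₁.coe.Adj ⟨π, hπU⟩ ⟨π * sw, hπ'U⟩ := ⟨hπU, hπ'U, hadj π⟩
      have r3 : H₁.coe.Reachable ⟨π * sw, hπ'U⟩ ⟨τ, hτ⟩ := keypart _ τ hπ'U hτ hπ'last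
      exact r1.trans (r2.reachable.trans r3)
  -- pendant edges
  have hx' : x * sw ∈ U := houtU x hx
  have hy' : y * sw ∈ U := houtU y hy
  have hz' : z * sw ∈ U := houtU z hz
  have hw' : w * sw ∈ U := houtU w hw
  have hH₁conn : H₁.Connected := by
    rw [Subgraph.connected_iff']
    have hne : Nonempty ↥H₁.verts := ⟨⟨x * sw, hx'⟩⟩
    exact Connected.mk fun u v => keyU u.1 v.1 u.2 v.2
  set H : (bubbleSortGraph n).Subgraph := H₁ ⊔ (bubbleSortGraph n).subgraphOfAdj (hadj x) ⊔ (bubbleSortGraph n).subgraphOfAdj (hadj y)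
      ⊔ (bubbleSortGraph n).subgraphOfAdj (hadj z) ⊔ (bubbleSortGraph n).subgraphOfAdj (hadj w) with hH
  have hHconn : H.Connected := by
    refine Subgraph.connected_sup (Subgraph.connected_sup (Subgraph.connected_sup
      (Subgraph.connected_sup hH₁conn.preconnected
        (Subgraph.subgraphOfAdj_connected (hadj x)).preconnected ?_).preconnected
      (Subgraph.subgraphOfAdj_connected (hadj y)).preconnected ?_).preconnected
      (Subgraph.subgraphOfAdj_connected (hadj z)).preconnected ?_).preconnected
      (Subgraph.subgraphOfAdj_connected (hadj w)).preconnected ?_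
    · exact ⟨x * sw, by rw [Subgraph.verts_inf]; exact ⟨hx', by simp⟩⟩
    · exact ⟨y * sw, by rw [Subgraph.verts_inf, Subgraph.verts_sup]; exact ⟨Or.inl hy', by simp⟩⟩
    · exact ⟨z * sw, by
        rw [Subgraph.verts_inf, Subgraph.verts_sup, Subgraph.verts_sup]
        exact ⟨Or.inl (Or.inl hz'), by simp⟩⟩
    · exact ⟨w * sw, by
        rw [Subgraph.verts_inf, Subgraph.verts_sup, Subgraph.verts_sup, Subgraph.verts_sup]
        exact ⟨Or.inl (Or.inl (Or.inl hw')), by simp⟩⟩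
  obtain ⟨Tn, hTnverts, hTnle, hTntree⟩ := BSAux.subgraph_exists_tree H hHconn
  have hHverts : H.verts = (((U ∪ {x, x * sw}) ∪ {y, y * sw}) ∪ {z, z * sw}) ∪ {w, w * sw} := by
    rw [hH]
    simp only [Subgraph.verts_sup, subgraphOfAdj_verts]
    rfl
  have hSsubH : ({x, y, z, w} : Set (Equiv.Perm (Fin n))) ⊆ H.verts := by
    rw [hHverts]
    rintro a (rfl | rfl | rfl | rfl)
    · exact Or.inl (Or.inl (Or.inl (Or.inr (by simp))))
    · exact Or.inl (Or.inl (Or.inr (by simp)))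
    · exact Or.inl (Or.inr (by simp))
    · exact Or.inr (by simp)
  have hSsubTn : ({x, y, z, w} : Set (Equiv.Perm (Fin n))) ⊆ Tn.verts := by
    rw [hTnverts]; exact hSsubH
  have hHadjU : ∀ a b : Equiv.Perm (Fin n), H.Adj a b → a ∈ U ∨ b ∈ U := by
    intro a b hab
    rw [hH] at hab
    rcases hab with ((((h1 | h1) | h1) | h1) | h1)
    · exact Or.inl h1.1
    all_goals
      rw [subgraphOfAdj_adj, Sym2.eq_iff] at h1
      rcases h1 with ⟨h2, h3⟩ | ⟨h2, h3⟩
    · exact Or.inr (h3 ▸ hx')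
    · exact Or.inl (h3 ▸ hx')
    · exact Or.inr (h3 ▸ hy')
    · exact Or.inl (h3 ▸ hy')
    · exact Or.inr (h3 ▸ hz')
    · exact Or.inl (h3 ▸ hz')
    · exact Or.inr (h3 ▸ hw')
    · exact Or.inl (h3 ▸ hw')
  -- old-new disjointness
  have hedge : ∀ i : Fin (n - 3), (T₀ i).edgeSet ∩ Tn.edgeSet = ∅ := by
    intro i
    rw [Set.eq_empty_iff_forall_notMem]
    intro e
    induction e using Sym2.ind with
    | _ a b =>
      rintro ⟨h1, h2⟩
      rw [Subgraph.mem_edgeSet] at h1 h2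
      have hHab : H.Adj a b := hTnle.2 h2
      rcases hHadjU a b hHab with hU' | hU'
      · exact hVmU a (hVsub i h1.fst_mem) hU'
      · exact hVmU b (hVsub i h1.snd_mem) hU'
  have hvert : ∀ i : Fin (n - 3), (T₀ i).verts ∩ Tn.verts = {x, y, z, w} := by
    intro i
    apply Set.eq_of_subset_of_subset
    · rintro a ⟨h1, h2⟩
      have hanU : a ∉ U := hVmU a (hVsub i h1)
      rw [hTnverts, hHverts] at h2
      rcases h2 with (((h2 | h2) | h2) | h2) | h2
      · exact absurd h2 hanU
      · rcases h2 with rfl | h2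
        · exact Or.inl rfl
        · rw [Set.mem_singleton_iff] at h2; exact absurd (h2 ▸ hx') hanU
      · rcases h2 with rfl | h2
        · exact Or.inr (Or.inl rfl)
        · rw [Set.mem_singleton_iff] at h2; exact absurd (h2 ▸ hy') hanU
      · rcases h2 with rfl | h2
        · exact Or.inr (Or.inr (Or.inl rfl))
        · rw [Set.mem_singleton_iff] at h2; exact absurd (h2 ▸ hz') hanU
      · rcases h2 with rfl | h2
        · exact Or.inr (Or.inr (Or.inr rfl))
        · rw [Set.mem_singleton_iff] at h2; exact absurd (h2 ▸ hw') hanU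
    · intro a ha
      exact ⟨(hIDT.1 i).2 ha, hSsubTn ha⟩
  -- assemble the family
  refine ⟨fun i => if hi : (i : ℕ) < n - 3 then T₀ ⟨i, hi⟩ else Tn, ?_, ?_⟩
  · intro i
    dsimp only
    by_cases hi : (i : ℕ) < n - 3
    · rw [dif_pos hi]
      exact hIDT.1 _
    · rw [dif_neg hi]
      exact ⟨hTntree, hSsubTn⟩
  · intro i j hij
    dsimp only
    by_cases hi : (i : ℕ) < n - 3 <;> by_cases hj : (j : ℕ) < n - 3
    · rw [dif_pos hi, dif_pos hj]
      exact hIDT.2 fun hcon => hij (Fin.ext (Fin.mk_eq_mk.mp hcon))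
    · rw [dif_pos hi, dif_neg hj]
      exact ⟨hedge _, hvert _⟩
    · rw [dif_neg hi, dif_pos hj]
      refine ⟨?_, ?_⟩
      · rw [Set.inter_comm]; exact hedge _
      · rw [Set.inter_comm]; exact hvert _
    · exfalso
      have h1 := i.isLt
      have h2 := j.isLt
      exact hij (Fin.ext (by omega))
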